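/- arXiv:1607.00989 — 2 statements merged into one kernel-verified Lean document; each statement's English description precedes it below -/
import Mathlib

section
/- With notation as in the (α,β)-metric setting, the determinant ratio σ_g(y) = det g_y / det a for α(y) = 1 satisfies σ_g(y) = ρ^{m-1}(ρ² + ρ₀ρ₁β(y)³ + ρ₁²β(y)² + (ρ − ρ₀b²)ρ₁β(y) + (ρρ₀ − ρ₁²)b²) = φ^{m+2}(φ − sφ')^{m-1}[φ − sφ' + (b² − s²)φ''] > 0, where s = β(y). In particular, the two closed-form expressions in terms of (ρ, ρ₀, ρ₁) and in terms of (φ, φ', φ'') agree as functions of s and b. -/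
/-- the determinant ratio `σ_g(y)` of an (α,β)-metric at an α-unit vector `y`
(with `s = β(y)`, `|s| ≤ b < b₀`) satisfies the algebraic identity
`ρ^{m-1}(ρ² + ρ₀ρ₁s³ + ρ₁²s² + (ρ − ρ₀b²)ρ₁s + (ρρ₀ − ρ₁²)b²)
  = φ^{m+2}(φ − sφ')^{m-1}[φ − sφ' + (b² − s²)φ'']`, and this quantity is positive.
Here `p, p', p''` denote the values `φ(s), φ'(s), φ''(s)`. -/
theorem stmt_2 (m : ℕ) (hm : 1 ≤ m) (b₀ s b p p' p'' : ℝ)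
    (hsb : |s| ≤ b) (hb : b < b₀) (hp : 0 < p)
    (hps : 0 < p - s * p')
    (hconv : 0 < p - s * p' + (b ^ 2 - s ^ 2) * p'') :
    let ρ := p * (p - s * p')
    let ρ₀ := p * p'' + p' ^ 2
    let ρ₁ := -s * (p * p'' + p' ^ 2) + p * p'
    ρ ^ (m - 1) * (ρ ^ 2 + ρ₀ * ρ₁ * s ^ 3 + ρ₁ ^ 2 * s ^ 2 +
        (ρ - ρ₀ * b ^ 2) * ρ₁ * s + (ρ * ρ₀ - ρ₁ ^ 2) * b ^ 2) =
      p ^ (m + 2) * (p - s * p') ^ (m - 1) *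
        (p - s * p' + (b ^ 2 - s ^ 2) * p'') ∧
    0 < p ^ (m + 2) * (p - s * p') ^ (m - 1) *
        (p - s * p' + (b ^ 2 - s ^ 2) * p'') := by
  intro ρ ρ₀ ρ₁
  constructor
  · have hkey : ρ ^ 2 + ρ₀ * ρ₁ * s ^ 3 + ρ₁ ^ 2 * s ^ 2 +
        (ρ - ρ₀ * b ^ 2) * ρ₁ * s + (ρ * ρ₀ - ρ₁ ^ 2) * b ^ 2 =
        p ^ 3 * (p - s * p' + (b ^ 2 - s ^ 2) * p'') := by
      simp only [ρ, ρ₀, ρ₁]; ring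
    have hρ : ρ ^ (m - 1) = p ^ (m - 1) * (p - s * p') ^ (m - 1) := by
      simp only [ρ]; rw [mul_pow]
    rw [hkey, hρ]
    have hpm : p ^ (m - 1) * p ^ 3 = p ^ (m + 2) := by
      rw [← pow_add]; congr 1; omega
    rw [← hpm]; ring
  · positivity
end

section
/- For the Kropina metric φ(s) = 1/s, the value s = β(n) determined by the relations β(n) = ĉβ(N) − γ₁b², γ₁ = −1/(2β(n)), and ĉ = γ₁β(N) + √(1 − γ₁²(b² − β(N)²)) satisfies β(n) = sign(β(N))·√(b(b + |β(N)|)/2). Moreover the discriminant condition 4β(n)² ≥ b² − β(N)² holds automatically. -/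
/-!
Multiplying the defining relation by `2t` turns it into `2tβ(N)·r = 2t² − (b² − β(N)²)`, where
`r ≥ 0` is the square root in `ĉ`. Since `t` and `β(N)` have the same sign, the right-hand side is
nonnegative, which already gives the discriminant condition. Squaring then yields a quadratic
in `u = 2t²`, namely `(u − b²)² = b²β(N)²`, and the root `b² − b|β(N)|` is excluded by
`u ≥ b² − β(N)²` together with `|β(N)| ≤ b`.
-/

namespace Kropina

lemma mul_sqrt_eq_of_eq_sub {b β t s : ℝ} (ht0 : t ≠ 0)
    (ht : t = (-(1 / (2 * t)) * β + s) * β - (-(1 / (2 * t))) * b ^ 2) :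
    2 * t * β * s = 2 * t ^ 2 - (b ^ 2 - β ^ 2) := by
  field_simp at ht
  linear_combination -ht

lemma sq_mul_sqrt_one_sub {D t : ℝ} (ht0 : t ≠ 0) (hD : D ≤ 4 * t ^ 2) :
    (2 * t * √(1 - (-(1 / (2 * t))) ^ 2 * D)) ^ 2 = 4 * t ^ 2 - D := by
  have harg : 0 ≤ 1 - (-(1 / (2 * t))) ^ 2 * D := by
    have hcoef : (-(1 / (2 * t))) ^ 2 * D = D / (4 * t ^ 2) := by field_simp; ring
    rw [hcoef, sub_nonneg, div_le_one (by positivity)]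
    exact hD
  rw [mul_pow, Real.sq_sqrt harg]
  field_simp
  ring

lemma eq_add_of_sq_sub_eq {b β u : ℝ} (hβ : |β| ≤ b) (hu : 0 < u) (hD : b ^ 2 - β ^ 2 ≤ u)
    (h : (u - (b ^ 2 - β ^ 2)) ^ 2 = β ^ 2 * (2 * u - (b ^ 2 - β ^ 2))) :
    u = b ^ 2 + b * |β| := by
  have hroots : (u - b ^ 2 - b * |β|) * (u - b ^ 2 + b * |β|) = 0 := by
    linear_combination h - b ^ 2 * sq_abs β
  rcases mul_eq_zero.mp hroots with hplus | hminus
  · linarith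
  · -- `b|β| ≥ β²` forces `u = b² − β²`, and then `h` forces `β = 0`
    have hbβ : b * |β| = β ^ 2 := by
      nlinarith [mul_le_mul_of_nonneg_right hβ (abs_nonneg β), sq_abs β]
    have huD : u = b ^ 2 - β ^ 2 := by linarith
    have hβu : β ^ 2 * u = 0 := by
      linear_combination -h + (u - (b ^ 2 - β ^ 2) - β ^ 2) * huD
    have hβ0 : β = 0 :=
      pow_eq_zero_iff two_ne_zero |>.mp (mul_eq_zero.mp hβu |>.resolve_right hu.ne')
    subst hβ0
    simp only [abs_zero, mul_zero] at hminus ⊢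
    linarith

lemma eq_sign_mul_abs_of_mul_pos {t β : ℝ} (h : 0 < t * β) : t = Real.sign β * |t| := by
  rcases lt_or_gt_of_ne (right_ne_zero_of_mul h.ne') with hβ | hβ
  · rw [Real.sign_of_neg hβ, abs_of_neg (neg_of_mul_pos_left h hβ.le)]
    ring
  · rw [Real.sign_of_pos hβ, abs_of_pos (pos_of_mul_pos_left h hβ.le), one_mul]

end Kropina

open Kropina in
theorem stmt_12_general (b βN t : ℝ) (hbβN : |βN| ≤ b)
    (ht0 : t ≠ 0) (hsign : 0 < t * βN)
    (ht : t = (-(1 / (2 * t)) * βN +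
        Real.sqrt (1 - (-(1 / (2 * t))) ^ 2 * (b ^ 2 - βN ^ 2))) * βN -
      (-(1 / (2 * t))) * b ^ 2) :
    t = Real.sign βN * Real.sqrt (b * (b + |βN|) / 2) ∧
    b ^ 2 - βN ^ 2 ≤ 4 * t ^ 2 := by
  set s := √(1 - (-(1 / (2 * t))) ^ 2 * (b ^ 2 - βN ^ 2))
  have hrel := mul_sqrt_eq_of_eq_sub ht0 ht
  have hhalf : b ^ 2 - βN ^ 2 ≤ 2 * t ^ 2 := by
    have : 0 ≤ 2 * (t * βN) * s := by positivity
    linarith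
  have hdisc : b ^ 2 - βN ^ 2 ≤ 4 * t ^ 2 := by linarith [sq_nonneg t]
  have hquad : (2 * t ^ 2 - (b ^ 2 - βN ^ 2)) ^ 2 =
      βN ^ 2 * (2 * (2 * t ^ 2) - (b ^ 2 - βN ^ 2)) := by
    rw [← hrel, mul_right_comm, mul_pow, sq_mul_sqrt_one_sub ht0 hdisc]
    ring
  have hroot := eq_add_of_sq_sub_eq hbβN (by positivity) hhalf hquad
  refine ⟨?_, hdisc⟩
  rw [show b * (b + |βN|) / 2 = t ^ 2 by linarith, Real.sqrt_sq_eq_abs]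
  exact eq_sign_mul_abs_of_mul_pos hsign

/-- for the Kropina metric, the value `t = β(n)` determined by
`t = ĉβ(N) − γ₁b²` with `γ₁ = −1/(2t)`, `ĉ = γ₁β(N) + √(1 − γ₁²(b² − β(N)²))`
and having the sign of `β(N)` satisfies `t = sign(β(N))·√(b(b + |β(N)|)/2)`;
moreover the discriminant condition `4t² ≥ b² − β(N)²` holds automatically. -/
theorem stmt_12 (b βN t : ℝ) (hb : 0 < b) (hβN : βN ≠ 0) (hbβN : |βN| ≤ b)
    (ht0 : t ≠ 0) (hsign : 0 < t * βN)
    (ht : t = (-(1 / (2 * t)) * βN +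
        Real.sqrt (1 - (-(1 / (2 * t))) ^ 2 * (b ^ 2 - βN ^ 2))) * βN -
      (-(1 / (2 * t))) * b ^ 2) :
    t = Real.sign βN * Real.sqrt (b * (b + |βN|) / 2) ∧
    b ^ 2 - βN ^ 2 ≤ 4 * t ^ 2 :=
  stmt_12_general b βN t hbβN ht0 hsign ht
end
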